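/- In the witnessing instance with k+1 parallel s-t edges of length M+1, path edges ℓ(su_1) = M and ℓ(u_i u_{i+1}) = 2^i M for 1 ≤ i ≤ k−1, zero-length edges u_i t, and failure scenario F = {u_1t, …, u_kt}: the greedy shortest-path strategy incurs total cost exactly (2^{k+1} − 1)M + 1, while the optimal worst-case cost y^k(s,E) satisfies y^k(s,E) ≤ M + 1. Moreover, 2·∑_{i=0}^{k-1} 2^i M + M + 1 = (2^{k+1} − 1)M + 1. -/

import Mathlib

open scoped ENNReal
open Classical in

noncomputable section

/-- Multigraph setting: edges `Eg` with endpoints `ends : Eg → Sym2 V` and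
weights `ℓ : Eg → ℝ≥0∞`.  The other endpoint of an edge `e` probed from `v`. -/
noncomputable def otherEnd {V Eg : Type*} (ends : Eg → Sym2 V) (e : Eg) (v : V) : V :=
  if h : v ∈ ends e then Sym2.Mem.other h else v

/-- A routing strategy: given the set of failed edges discovered so far and the
current vertex, it chooses the next edge to probe. -/
abbrev Strategy (V Eg : Type*) := Set Eg → V → Eg

open Classical in
/-- One step of executing a strategy `R` in the network with active edge set `E'`,
actual failure set `F`, and destination `t`; the state is (current vertex, set of
discovered failed edges).  A failed edge is discovered only upon probing. -/
noncomputable def rstep {V Eg : Type*} (ends : Eg → Sym2 V) (E' F : Set Eg)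
    (R : Strategy V Eg) (t : V) : V × Set Eg → V × Set Eg := fun p =>
  if p.1 = t then p
  else if R p.2 p.1 ∈ E' ∧ p.1 ∈ ends (R p.2 p.1) then
    if R p.2 p.1 ∈ F then (p.1, insert (R p.2 p.1) p.2)
    else (otherEnd ends (R p.2 p.1) p.1, p.2)
  else p

/-- The state after `n` steps when starting at `u` knowing no failures. -/
noncomputable def rstate {V Eg : Type*} (ends : Eg → Sym2 V) (E' F : Set Eg)
    (R : Strategy V Eg) (t u : V) (n : ℕ) : V × Set Eg :=
  (rstep ends E' F R t)^[n] (u, ∅)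

/-- The walk induced by `R` reaches the destination `t`. -/
def ReachesT {V Eg : Type*} (ends : Eg → Sym2 V) (E' F : Set Eg)
    (R : Strategy V Eg) (t u : V) : Prop :=
  ∃ n, (rstate ends E' F R t u n).1 = t

open Classical in
/-- Cost incurred in one step (the weight of a successfully traversed edge). -/
noncomputable def rstepCost {V Eg : Type*} (ends : Eg → Sym2 V) (ℓ : Eg → ℝ≥0∞)
    (E' F : Set Eg) (R : Strategy V Eg) (t : V) (p : V × Set Eg) : ℝ≥0∞ :=
  if p.1 = t then 0
  else if R p.2 p.1 ∈ E' ∧ p.1 ∈ ends (R p.2 p.1) ∧ R p.2 p.1 ∉ F then ℓ (R p.2 p.1)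
  else 0

open Classical in
/-- The length `ℓ(θ_R(u,E',F))` of the walk induced by `R` under scenario `F`
(`⊤` if the walk never reaches `t`). -/
noncomputable def walkCost {V Eg : Type*} (ends : Eg → Sym2 V) (ℓ : Eg → ℝ≥0∞)
    (E' F : Set Eg) (R : Strategy V Eg) (t u : V) : ℝ≥0∞ :=
  if ReachesT ends E' F R t u then
    ∑' n, rstepCost ends ℓ E' F R t (rstate ends E' F R t u n)
  else ⊤

/-- `Val_k(u,E',R)`: worst-case cost of `R` over all scenarios of at most `k`
failed edges. -/
noncomputable def Valk {V Eg : Type*} (ends : Eg → Sym2 V) (ℓ : Eg → ℝ≥0∞) (k : ℕ)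
    (E' : Set Eg) (t u : V) (R : Strategy V Eg) : ℝ≥0∞ :=
  ⨆ F ∈ {F : Set Eg | F ⊆ E' ∧ F.Finite ∧ F.ncard ≤ k}, walkCost ends ℓ E' F R t u

/-- The `k`-potential `y^k(u,E')`: optimum worst-case cost over all strategies. -/
noncomputable def yk {V Eg : Type*} (ends : Eg → Sym2 V) (ℓ : Eg → ℝ≥0∞) (k : ℕ)
    (E' : Set Eg) (t u : V) : ℝ≥0∞ :=
  ⨅ R : Strategy V Eg, Valk ends ℓ k E' t u R

/-- `IsPathFrom ends vis v t es`: the edge list `es` forms a simple `v`-`t` path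
avoiding the already visited vertices `vis`. -/
def IsPathFrom {V Eg : Type*} (ends : Eg → Sym2 V) : Set V → V → V → List Eg → Prop
  | _, v, t, [] => v = t
  | vis, v, t, e :: es =>
      ∃ u, ends e = s(v, u) ∧ u ∉ insert v vis ∧ IsPathFrom ends (insert v vis) u t es

/-- Weighted shortest-path distance in the multigraph restricted to edges `E'`. -/
noncomputable def mwdist {V Eg : Type*} (ends : Eg → Sym2 V) (ℓ : Eg → ℝ≥0∞)
    (E' : Set Eg) (v t : V) : ℝ≥0∞ :=
  ⨅ es ∈ {es : List Eg | (∀ e ∈ es, e ∈ E') ∧ IsPathFrom ends ∅ v t es},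
    (es.map ℓ).sum

/-- The greedy shortest-path strategy `R_SP`: from every vertex `v ≠ t` at which a
shortest path to `t` in the remaining network exists, it probes the first edge of
such a shortest path. -/
def Greedy {V Eg : Type*} (ends : Eg → Sym2 V) (ℓ : Eg → ℝ≥0∞) (E' : Set Eg)
    (t : V) (R : Strategy V Eg) : Prop :=
  ∀ (F' : Set Eg) (v : V), v ≠ t → mwdist ends ℓ (E' \ F') v t ≠ ⊤ →
    R F' v ∈ E' \ F' ∧ v ∈ ends (R F' v) ∧
    ℓ (R F' v) + mwdist ends ℓ (E' \ F') (otherEnd ends (R F' v) v) t =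
      mwdist ends ℓ (E' \ F') v t
section General
variable {V Eg : Type*}

lemma otherEnd_eq (ends : Eg → Sym2 V) {e : Eg} {a b : V} (h : ends e = s(a, b)) :
    otherEnd ends e a = b := by
  have ha : a ∈ ends e := by rw [h]; exact Sym2.mem_mk_left a b
  rw [otherEnd, dif_pos ha]
  have hs := (Sym2.other_spec ha).trans h
  rcases Sym2.eq_iff.mp hs with ⟨_, h2⟩ | ⟨h1, h2⟩
  · exact h2
  · rw [h2, h1]

lemma mwdist_le_path (ends : Eg → Sym2 V) (ℓ : Eg → ℝ≥0∞) (E' : Set Eg) {v t : V}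
    {es : List Eg} (h1 : ∀ e ∈ es, e ∈ E') (h2 : IsPathFrom ends ∅ v t es) :
    mwdist ends ℓ E' v t ≤ (es.map ℓ).sum :=
  iInf₂_le es ⟨h1, h2⟩

lemma le_mwdist (ends : Eg → Sym2 V) (ℓ : Eg → ℝ≥0∞) (E' : Set Eg) {t : V}
    (φ : V → ℝ≥0∞) (hφt : φ t = 0)
    (hedge : ∀ e ∈ E', ∀ a b, ends e = s(a, b) → φ a ≤ ℓ e + φ b) (v : V) :
    φ v ≤ mwdist ends ℓ E' v t := by
  have key : ∀ (es : List Eg) (vis : Set V) (v : V), IsPathFrom ends vis v t es →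
      (∀ e ∈ es, e ∈ E') → φ v ≤ (es.map ℓ).sum := by
    intro es
    induction es with
    | nil => intro vis v h _; cases h; simp [hφt]
    | cons e es ih =>
      intro vis v h hmem
      obtain ⟨u, hse, _, hrest⟩ := h
      have h1 : φ v ≤ ℓ e + φ u := hedge e (hmem e (by simp)) v u hse
      have h2 : φ u ≤ (es.map ℓ).sum := ih _ u hrest (fun e' he' => hmem e' (by simp [he']))
      calc φ v ≤ ℓ e + φ u := h1
        _ ≤ ℓ e + (es.map ℓ).sum := by exact add_le_add_right h2 _
        _ = ((e :: es).map ℓ).sum := by simp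
  refine le_iInf₂ fun es hes => key es ∅ v hes.2 hes.1

lemma mwdist_self (ends : Eg → Sym2 V) (ℓ : Eg → ℝ≥0∞) (E' : Set Eg) (t : V) :
    mwdist ends ℓ E' t t = 0 := by
  refine le_antisymm ?_ (zero_le)
  have := mwdist_le_path ends ℓ E' (es := []) (v := t) (t := t) (by simp) (by trivial)
  simpa using this

lemma rstep_fixed (ends : Eg → Sym2 V) (E' F : Set Eg) (R : Strategy V Eg) (t : V)
    {p : V × Set Eg} (h : p.1 = t) : rstep ends E' F R t p = p := by
  rw [rstep, if_pos h]

lemma rstep_iterate_fixed (ends : Eg → Sym2 V) (E' F : Set Eg) (R : Strategy V Eg) (t : V)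
    {p : V × Set Eg} (h : p.1 = t) (n : ℕ) : (rstep ends E' F R t)^[n] p = p := by
  induction n with
  | zero => rfl
  | succ n ih => rw [Function.iterate_succ_apply', ih, rstep_fixed _ _ _ _ _ h]

lemma rstepCost_fixed (ends : Eg → Sym2 V) (ℓ : Eg → ℝ≥0∞) (E' F : Set Eg)
    (R : Strategy V Eg) (t : V) {p : V × Set Eg} (h : p.1 = t) :
    rstepCost ends ℓ E' F R t p = 0 := by
  rw [rstepCost, if_pos h]

end General
/-- Edge type of the witnessing instance. -/
abbrev EGr (k : ℕ) : Type := Fin (k + 1) ⊕ Fin k ⊕ Fin k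

/-- The set of discovered failed edges after `i` probes: `{u_1 t, …, u_i t}`. -/
def Dset (k : ℕ) (i : ℕ) : Set (EGr k) :=
  {e | ∃ m : Fin k, (m : ℕ) < i ∧ e = Sum.inr (Sum.inr m)}

def bedge (k : ℕ) (m : ℕ) : EGr k :=
  if h : m < k then Sum.inr (Sum.inl ⟨m, h⟩) else Sum.inl 0

def tedge (k : ℕ) (m : ℕ) : EGr k :=
  if h : m < k then Sum.inr (Sum.inr ⟨m, h⟩) else Sum.inl 0

/-- The lower-bound potential for the network with `D_i` removed. -/
noncomputable def pot (k M : ℕ) (i : ℕ) (x : ℕ) : ℝ≥0∞ :=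
  if x < i then 2 ^ x * M + 1
  else if x = i then (if i = k then 2 ^ i * M + 1 else 2 ^ i * M) else 0

/-- The return path from `u_j` back to `s` and across a parallel edge. -/
def backL (k : ℕ) : ℕ → List (EGr k)
  | 0 => [Sum.inl 0]
  | (j + 1) => bedge k j :: backL k j

section Inst
variable {k M : ℕ} {ends : EGr k → Sym2 ℕ} {ℓ : EGr k → ℝ≥0∞}
variable (hk : 1 ≤ k) (hM : 0 < M)
variable (h1 : ∀ j : Fin (k + 1), ends (Sum.inl j) = s(0, k + 1) ∧
  ℓ (Sum.inl j) = (M : ℝ≥0∞) + 1)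
variable (h2 : ∀ i : Fin k, ends (Sum.inr (Sum.inl i)) = s((i : ℕ), (i : ℕ) + 1) ∧
  ℓ (Sum.inr (Sum.inl i)) = if (i : ℕ) = 0 then (M : ℝ≥0∞) else 2 ^ (i : ℕ) * (M : ℝ≥0∞))
variable (h3 : ∀ i : Fin k, ends (Sum.inr (Sum.inr i)) = s((i : ℕ) + 1, k + 1) ∧
  ℓ (Sum.inr (Sum.inr i)) = 0)

include hM in
lemma hM1 : (1 : ℝ≥0∞) ≤ (M : ℝ≥0∞) := by
  exact_mod_cast Nat.one_le_cast.mpr hM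

include hM in
lemma one_le_pm (n : ℕ) : (1 : ℝ≥0∞) ≤ 2 ^ n * M := by
  calc (1:ℝ≥0∞) = 1 * 1 := by ring
    _ ≤ 2 ^ n * M := mul_le_mul' (one_le_pow_of_one_le' one_le_two n) (hM1 hM)

lemma pm_ne_top (n : ℕ) : (2 ^ n * M : ℝ≥0∞) ≠ ⊤ :=
  ENNReal.mul_ne_top (ENNReal.pow_ne_top ENNReal.ofNat_ne_top) (ENNReal.natCast_ne_top M)

lemma pm_succ (n : ℕ) : (2 ^ (n + 1) * M : ℝ≥0∞) = 2 ^ n * M + 2 ^ n * M := by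
  rw [pow_succ]; ring

include h2 in
lemma ℓb (i : Fin k) : ℓ (Sum.inr (Sum.inl i)) = 2 ^ (i : ℕ) * (M : ℝ≥0∞) := by
  rw [(h2 i).2]
  split
  · next h => rw [h]; simp
  · rfl

lemma bedge_eq {m : ℕ} (h : m < k) : bedge k m = Sum.inr (Sum.inl ⟨m, h⟩) := dif_pos h
lemma tedge_eq {m : ℕ} (h : m < k) : tedge k m = Sum.inr (Sum.inr ⟨m, h⟩) := dif_pos h

lemma mem_Dset {i : ℕ} {e : EGr k} :
    e ∈ Dset k i ↔ ∃ m : Fin k, (m : ℕ) < i ∧ e = Sum.inr (Sum.inr m) := Iff.rfl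

lemma inl_not_Dset {i : ℕ} (j : Fin (k + 1)) : (Sum.inl j : EGr k) ∉ Dset k i := by
  rintro ⟨m, _, h⟩; exact absurd h (by simp)

lemma be_not_Dset {i : ℕ} (m : Fin k) : (Sum.inr (Sum.inl m) : EGr k) ∉ Dset k i := by
  rintro ⟨m', _, h⟩; exact absurd h (by simp)

lemma te_mem_Dset {i : ℕ} (m : Fin k) :
    (Sum.inr (Sum.inr m) : EGr k) ∈ Dset k i ↔ (m : ℕ) < i := by
  constructor
  · rintro ⟨m', hm', he⟩
    have hh : m' = m := by simpa using he.symm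
    omega
  · intro h; exact ⟨m, h, rfl⟩

lemma Dset_zero : Dset k 0 = (∅ : Set (EGr k)) := by
  ext e; simp [mem_Dset]

lemma Dset_k_eq : Dset k k = Set.range (fun i : Fin k => (Sum.inr (Sum.inr i) : EGr k)) := by
  ext e
  constructor
  · rintro ⟨m, _, rfl⟩; exact ⟨m, rfl⟩
  · rintro ⟨m, rfl⟩; exact ⟨m, m.2, rfl⟩

lemma Dset_insert {m : ℕ} (hm : m < k) :
    insert (tedge k m) (Dset k m) = Dset k (m + 1) := by
  rw [tedge_eq hm]
  ext e
  simp only [Set.mem_insert_iff, mem_Dset]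
  constructor
  · rintro (rfl | ⟨m', hm', rfl⟩)
    · exact ⟨⟨m, hm⟩, by simp, rfl⟩
    · exact ⟨m', by omega, rfl⟩
  · rintro ⟨m', hm', rfl⟩
    rcases Nat.lt_succ_iff_lt_or_eq.mp hm' with h | h
    · exact Or.inr ⟨m', h, rfl⟩
    · left; congr 1; · congr 1; exact Fin.ext h
end Inst
section Inst2
variable {k M : ℕ} {ends : EGr k → Sym2 ℕ} {ℓ : EGr k → ℝ≥0∞}
variable (hk : 1 ≤ k) (hM : 0 < M)
variable (h1 : ∀ j : Fin (k + 1), ends (Sum.inl j) = s(0, k + 1) ∧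
  ℓ (Sum.inl j) = (M : ℝ≥0∞) + 1)
variable (h2 : ∀ i : Fin k, ends (Sum.inr (Sum.inl i)) = s((i : ℕ), (i : ℕ) + 1) ∧
  ℓ (Sum.inr (Sum.inl i)) = if (i : ℕ) = 0 then (M : ℝ≥0∞) else 2 ^ (i : ℕ) * (M : ℝ≥0∞))
variable (h3 : ∀ i : Fin k, ends (Sum.inr (Sum.inr i)) = s((i : ℕ) + 1, k + 1) ∧
  ℓ (Sum.inr (Sum.inr i)) = 0)

lemma pot_t {i : ℕ} (hi : i ≤ k) : pot k M i (k + 1) = 0 := by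
  rw [pot, if_neg (by omega), if_neg (by omega)]

lemma pot_lt {i x : ℕ} (h : x < i) : pot k M i x = 2 ^ x * M + 1 := by
  rw [pot, if_pos h]

lemma pot_gt {i x : ℕ} (h : i < x) : pot k M i x = 0 := by
  rw [pot, if_neg (by omega), if_neg (by omega)]

lemma pot_eq_lt {i : ℕ} (h : i < k) : pot k M i i = 2 ^ i * M := by
  rw [pot, if_neg (by omega), if_pos rfl, if_neg (by omega)]

lemma pot_eq_k : pot k M k k = 2 ^ k * M + 1 := by
  rw [pot, if_neg (by omega), if_pos rfl, if_pos rfl]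

include hk hM h1 h2 h3 in
lemma pot_feasible {i : ℕ} (hi : i ≤ k) :
    ∀ e ∈ Set.univ \ Dset k i, ∀ a b, ends e = s(a, b) →
      pot k M i a ≤ ℓ e + pot k M i b := by
  rintro e ⟨-, heD⟩ a b hab
  have pot0le : pot k M i 0 ≤ (M : ℝ≥0∞) + 1 := by
    rcases Nat.eq_zero_or_pos i with rfl | hi0
    · rw [pot, if_neg (by omega), if_pos rfl, if_neg (by omega)]
      simp only [pow_zero, one_mul]
      exact le_self_add
    · rw [pot_lt hi0]; simp
  rcases e with j | m | m
  · -- parallel edge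
    have he := (h1 j).1
    rw [(h1 j).2]
    rw [he] at hab
    rcases Sym2.eq_iff.mp hab.symm with ⟨ha, hb⟩ | ⟨ha, hb⟩ <;> subst ha <;> subst hb
    · rw [pot_t hi, add_zero]; exact pot0le
    · rw [pot_t hi]; exact zero_le
  · -- path edge between m and m+1
    have he := (h2 m).1
    rw [ℓb h2 m]
    rw [he] at hab
    have hmk : (m : ℕ) < k := m.2
    have key : pot k M i (m : ℕ) ≤ 2 ^ (m : ℕ) * M + pot k M i ((m : ℕ) + 1) ∧
        pot k M i ((m : ℕ) + 1) ≤ 2 ^ (m : ℕ) * M + pot k M i (m : ℕ) := by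
      set m' : ℕ := (m : ℕ)
      rcases Nat.lt_trichotomy (m' + 1) i with hc | hc | hc
      · rw [pot_lt (by omega), pot_lt hc, pm_succ]
        constructor
        · calc 2 ^ m' * (M:ℝ≥0∞) + 1 ≤ (2 ^ m' * M + (2 ^ m' * M + 2 ^ m' * M)) + 1 :=
              add_le_add_left le_self_add 1
            _ = 2 ^ m' * M + (2 ^ m' * M + 2 ^ m' * M + 1) := by ring
        · apply le_of_eq; ring
      · -- m' + 1 = i
        subst hc
        rw [pot_lt (by omega)]
        have hpi : pot k M (m' + 1) (m' + 1) ≤ 2 ^ (m' + 1) * M + 1 ∧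
            2 ^ (m' + 1) * M ≤ pot k M (m' + 1) (m' + 1) := by
          rcases eq_or_lt_of_le hi with hik | hik
          · rw [hik, pot_eq_k]; exact ⟨le_refl _, le_self_add⟩
          · rw [pot_eq_lt hik]; exact ⟨le_self_add, le_refl _⟩
        constructor
        · calc 2 ^ m' * (M:ℝ≥0∞) + 1 ≤ 2 ^ m' * M + 2 ^ (m' + 1) * M :=
              add_le_add_right (one_le_pm hM (m' + 1)) _
            _ ≤ 2 ^ m' * M + pot k M (m' + 1) (m' + 1) := add_le_add_right hpi.2 _
        · calc pot k M (m' + 1) (m' + 1) ≤ 2 ^ (m' + 1) * M + 1 := hpi.1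
            _ = 2 ^ m' * M + (2 ^ m' * M + 1) := by rw [pm_succ]; ring
      · -- i < m' + 1, i.e. i ≤ m'
        rcases eq_or_lt_of_le (Nat.lt_succ_iff.mp hc) with rfl | him
        · -- i = m'
          rw [pot_eq_lt hmk, pot_gt (by omega), add_zero]
          exact ⟨le_refl _, zero_le⟩
        · rw [pot_gt him, pot_gt (by omega)]
          exact ⟨zero_le, le_trans (zero_le) (le_refl _)⟩
    rcases Sym2.eq_iff.mp hab.symm with ⟨ha, hb⟩ | ⟨ha, hb⟩ <;> subst ha <;> subst hb
    · exact key.1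
    · exact key.2
  · -- tedge m, present means i ≤ m
    have him : ¬ ((m : ℕ) < i) := fun h => heD ((te_mem_Dset m).mpr h)
    have he := (h3 m).1
    rw [(h3 m).2]
    rw [he] at hab
    have hpm : pot k M i ((m : ℕ) + 1) = 0 := pot_gt (by omega)
    rcases Sym2.eq_iff.mp hab.symm with ⟨ha, hb⟩ | ⟨ha, hb⟩ <;> subst ha <;> subst hb
    · rw [hpm]; exact zero_le
    · rw [pot_t hi]; exact zero_le

include hk hM h1 h2 h3 in
lemma mwdist_ge_pot {i : ℕ} (hi : i ≤ k) (v : ℕ) :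
    pot k M i v ≤ mwdist ends ℓ (Set.univ \ Dset k i) v (k + 1) :=
  le_mwdist ends ℓ _ (pot k M i) (pot_t hi) (pot_feasible hk hM h1 h2 h3 hi) v

end Inst2
section Inst3
variable {k M : ℕ} {ends : EGr k → Sym2 ℕ} {ℓ : EGr k → ℝ≥0∞}
variable (hk : 1 ≤ k) (hM : 0 < M)
variable (h1 : ∀ j : Fin (k + 1), ends (Sum.inl j) = s(0, k + 1) ∧
  ℓ (Sum.inl j) = (M : ℝ≥0∞) + 1)
variable (h2 : ∀ i : Fin k, ends (Sum.inr (Sum.inl i)) = s((i : ℕ), (i : ℕ) + 1) ∧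
  ℓ (Sum.inr (Sum.inl i)) = if (i : ℕ) = 0 then (M : ℝ≥0∞) else 2 ^ (i : ℕ) * (M : ℝ≥0∞))
variable (h3 : ∀ i : Fin k, ends (Sum.inr (Sum.inr i)) = s((i : ℕ) + 1, k + 1) ∧
  ℓ (Sum.inr (Sum.inr i)) = 0)

include h2 in
lemma ends_bedge {m : ℕ} (hm : m < k) : ends (bedge k m) = s(m, m + 1) := by
  rw [bedge_eq hm]; exact (h2 ⟨m, hm⟩).1

include h2 in
lemma ℓ_bedge {m : ℕ} (hm : m < k) : ℓ (bedge k m) = 2 ^ m * (M : ℝ≥0∞) := by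
  rw [bedge_eq hm]; exact ℓb h2 ⟨m, hm⟩

include h3 in
lemma ends_tedge {m : ℕ} (hm : m < k) : ends (tedge k m) = s(m + 1, k + 1) := by
  rw [tedge_eq hm]; exact (h3 ⟨m, hm⟩).1

include h3 in
lemma ℓ_tedge {m : ℕ} (hm : m < k) : ℓ (tedge k m) = 0 := by
  rw [tedge_eq hm]; exact (h3 ⟨m, hm⟩).2

lemma bedge_not_Dset {m i : ℕ} (hm : m < k) : bedge k m ∉ Dset k i := by
  rw [bedge_eq hm]; exact be_not_Dset _

include h1 h2 in
lemma backL_path : ∀ j, j ≤ k → ∀ vis : Set ℕ, (∀ x ∈ vis, j < x ∧ x ≤ k) →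
    IsPathFrom ends vis j (k + 1) (backL k j) := by
  intro j
  induction j with
  | zero =>
    intro _ vis hvis
    refine ⟨k + 1, (h1 0).1, ?_, rfl⟩
    rintro (h | h)
    · omega
    · exact absurd (hvis _ h).2 (by omega)
  | succ j ih =>
    intro hj vis hvis
    refine ⟨j, ?_, ?_, ?_⟩
    · rw [ends_bedge h2 (by omega)]; exact Sym2.eq_swap
    · rintro (h | h)
      · omega
      · exact absurd (hvis _ h).1 (by omega)
    · refine ih (by omega) _ ?_
      rintro x (rfl | hx)
      · exact ⟨by omega, hj⟩
      · have hx' := hvis x hx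
        exact ⟨by omega, hx'.2⟩

include h1 h2 in
lemma backL_sum : ∀ j, j ≤ k → ((backL k j).map ℓ).sum = 2 ^ j * M + 1 := by
  intro j
  induction j with
  | zero =>
    intro _
    simp [backL, (h1 0).2, pow_zero, one_mul]
  | succ j ih =>
    intro hj
    have : ((backL k (j+1)).map ℓ).sum = ℓ (bedge k j) + ((backL k j).map ℓ).sum := by
      simp [backL]
    rw [this, ih (by omega), ℓ_bedge h2 (by omega), pm_succ]
    ring

lemma backL_notin_Dset {i : ℕ} : ∀ j, j ≤ k → ∀ e ∈ backL k j, e ∈ Set.univ \ Dset k i := by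
  intro j
  induction j with
  | zero =>
    intro _ e he
    simp only [backL, List.mem_singleton] at he
    exact ⟨trivial, he ▸ inl_not_Dset 0⟩
  | succ j ih =>
    intro hj e he
    simp only [backL, List.mem_cons] at he
    rcases he with rfl | he
    · exact ⟨trivial, bedge_not_Dset (by omega)⟩
    · exact ih (by omega) e he

include h1 h2 in
lemma ub_back {i : ℕ} {j : ℕ} (hj : j ≤ k) :
    mwdist ends ℓ (Set.univ \ Dset k i) j (k + 1) ≤ 2 ^ j * M + 1 := by
  rw [← backL_sum h1 h2 j hj]
  exact mwdist_le_path ends ℓ _ (backL_notin_Dset j hj) (backL_path h1 h2 j hj ∅ (by simp))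

include h3 in
lemma ub_probe {m : ℕ} (hm : m < k) :
    mwdist ends ℓ (Set.univ \ Dset k m) (m + 1) (k + 1) = 0 := by
  refine le_antisymm ?_ (zero_le)
  have hpath : IsPathFrom ends ∅ (m + 1) (k + 1) [tedge k m] := by
    refine ⟨k + 1, ends_tedge h3 hm, ?_, rfl⟩
    rintro (h | h)
    · omega
    · simp at h
  have := mwdist_le_path ends ℓ (Set.univ \ Dset k m)
    (es := [tedge k m]) ?_ hpath
  · simpa [ℓ_tedge h3 hm] using this
  · intro e he
    simp only [List.mem_singleton] at he
    subst he
    exact ⟨trivial, by rw [tedge_eq hm]; simp [te_mem_Dset]⟩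

include h2 h3 in
lemma ub_fwd {j : ℕ} (hj : j < k) :
    mwdist ends ℓ (Set.univ \ Dset k j) j (k + 1) ≤ 2 ^ j * M := by
  have hpath : IsPathFrom ends ∅ j (k + 1) [bedge k j, tedge k j] := by
    refine ⟨j + 1, ends_bedge h2 hj, by simp, ?_⟩
    refine ⟨k + 1, ends_tedge h3 hj, ?_, rfl⟩
    rintro (h | h)
    · omega
    · rcases h with h | h
      · omega
      · simp at h
  have := mwdist_le_path ends ℓ (Set.univ \ Dset k j)
    (es := [bedge k j, tedge k j]) ?_ hpath
  · simpa [ℓ_bedge h2 hj, ℓ_tedge h3 hj] using this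
  · intro e he
    simp only [List.mem_cons, List.mem_singleton] at he
    rcases he with rfl | rfl | h
    · exact ⟨trivial, bedge_not_Dset hj⟩
    · exact ⟨trivial, by rw [tedge_eq hj]; simp [te_mem_Dset]⟩
    · simp at h
end Inst3
section Inst4
variable {k M : ℕ} {ends : EGr k → Sym2 ℕ} {ℓ : EGr k → ℝ≥0∞}
variable (hk : 1 ≤ k) (hM : 0 < M)
variable (h1 : ∀ j : Fin (k + 1), ends (Sum.inl j) = s(0, k + 1) ∧
  ℓ (Sum.inl j) = (M : ℝ≥0∞) + 1)
variable (h2 : ∀ i : Fin k, ends (Sum.inr (Sum.inl i)) = s((i : ℕ), (i : ℕ) + 1) ∧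
  ℓ (Sum.inr (Sum.inl i)) = if (i : ℕ) = 0 then (M : ℝ≥0∞) else 2 ^ (i : ℕ) * (M : ℝ≥0∞))
variable (h3 : ∀ i : Fin k, ends (Sum.inr (Sum.inr i)) = s((i : ℕ) + 1, k + 1) ∧
  ℓ (Sum.inr (Sum.inr i)) = 0)
variable {RSP : Strategy ℕ (EGr k)} (hG : Greedy ends ℓ Set.univ (k + 1) RSP)

lemma pot_k_le {x : ℕ} (hx : x ≤ k) : pot k M k x = 2 ^ x * M + 1 := by
  rcases lt_or_eq_of_le hx with h | h
  · exact pot_lt h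
  · rw [h]; exact pot_eq_k

lemma pm_lt_succ {n : ℕ} : (2 ^ n * M : ℝ≥0∞) < 2 ^ n * M + 1 :=
  ENNReal.lt_add_right (pm_ne_top n) one_ne_zero

include hk hM h1 h2 h3 hG in
lemma force_fwd {j : ℕ} (hj : j < k) : RSP (Dset k j) j = bedge k j := by
  have hd := ub_fwd h2 h3 hj
  have hfin : mwdist ends ℓ (Set.univ \ Dset k j) j (k + 1) ≠ ⊤ :=
    fun h => pm_ne_top (M := M) j (top_le_iff.mp (h ▸ hd))
  obtain ⟨hmem, hin, heq⟩ := hG (Dset k j) j (by omega) hfin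
  rcases hR : RSP (Dset k j) j with j' | m | m <;> rw [hR] at hmem hin heq
  · rw [(h1 j').1, Sym2.mem_iff] at hin
    rcases hin with rfl | hin
    · exfalso
      rw [otherEnd_eq ends (h1 j').1, mwdist_self, (h1 j').2, add_zero] at heq
      have hle : (M : ℝ≥0∞) + 1 ≤ 2 ^ 0 * M := heq ▸ hd
      simp only [pow_zero, one_mul] at hle
      exact absurd hle
        (not_le.mpr (ENNReal.lt_add_right (ENNReal.natCast_ne_top M) one_ne_zero))
    · omega
  · rw [(h2 m).1, Sym2.mem_iff] at hin
    rcases hin with rfl | hin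
    · rw [bedge_eq hj]
    · -- j = m + 1 : moving backwards, ruled out
      exfalso
      have hends : ends (Sum.inr (Sum.inl m)) = s(j, (m : ℕ)) := by
        rw [(h2 m).1, hin]; exact Sym2.eq_swap
      rw [otherEnd_eq ends hends, ℓb h2 m] at heq
      have hlow : 2 ^ (m : ℕ) * (M : ℝ≥0∞) + 1 ≤
          mwdist ends ℓ (Set.univ \ Dset k j) (m : ℕ) (k + 1) := by
        have := mwdist_ge_pot (ends := ends) (ℓ := ℓ) hk hM h1 h2 h3 (le_of_lt hj) (m : ℕ)
        rwa [pot_lt (by omega)] at this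
      have : 2 ^ j * (M : ℝ≥0∞) + 1 ≤ 2 ^ j * M := by
        calc 2 ^ j * (M : ℝ≥0∞) + 1 = 2 ^ (m : ℕ) * M + (2 ^ (m : ℕ) * M + 1) := by
              rw [hin, pm_succ]; ring
          _ ≤ 2 ^ (m : ℕ) * M + mwdist ends ℓ (Set.univ \ Dset k j) (m : ℕ) (k + 1) :=
              add_le_add_right hlow _
          _ = mwdist ends ℓ (Set.univ \ Dset k j) j (k + 1) := heq
          _ ≤ 2 ^ j * M := hd
      exact absurd this (not_le.mpr pm_lt_succ)
  · exfalso
    rw [(h3 m).1, Sym2.mem_iff] at hin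
    rcases hin with hin | hin
    · exact hmem.2 ((te_mem_Dset m).mpr (by omega))
    · omega

include hk hM h1 h2 h3 hG in
lemma force_probe {m : ℕ} (hm : m < k) : RSP (Dset k m) (m + 1) = tedge k m := by
  have hd := ub_probe (ends := ends) (ℓ := ℓ) h3 hm
  have hfin : mwdist ends ℓ (Set.univ \ Dset k m) (m + 1) (k + 1) ≠ ⊤ := by
    rw [hd]; exact ENNReal.zero_ne_top
  obtain ⟨hmem, hin, heq⟩ := hG (Dset k m) (m + 1) (by omega) hfin
  rw [hd] at heq
  have hℓ0 : ℓ (RSP (Dset k m) (m + 1)) = 0 := (add_eq_zero.mp heq).1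
  rcases hR : RSP (Dset k m) (m + 1) with j' | m' | m' <;> rw [hR] at hmem hin hℓ0
  · exfalso
    rw [(h1 j').2] at hℓ0
    simp at hℓ0
  · exfalso
    rw [ℓb h2 m'] at hℓ0
    have := one_le_pm (M := M) hM (m' : ℕ)
    rw [hℓ0] at this
    simp at this
  · rw [(h3 m').1, Sym2.mem_iff] at hin
    rcases hin with hin | hin
    · rw [tedge_eq hm]
      congr 2
      exact Fin.ext (by simp only [Fin.val_mk]; omega)
    · omega

include hk hM h1 h2 h3 hG in
lemma force_back {m : ℕ} (hm : m < k) : RSP (Dset k k) (m + 1) = bedge k m := by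
  have hd := ub_back (ends := ends) (ℓ := ℓ) (i := k) h1 h2 (j := m + 1) (by omega)
  have hfin : mwdist ends ℓ (Set.univ \ Dset k k) (m + 1) (k + 1) ≠ ⊤ :=
    fun h => by
      rw [h] at hd
      exact absurd (top_le_iff.mp hd) (by
        exact fun hh => pm_ne_top (M := M) (m+1) (by
          rcases ENNReal.add_eq_top.mp hh with h' | h'
          · exact h'
          · exact absurd h' ENNReal.one_ne_top))
  obtain ⟨hmem, hin, heq⟩ := hG (Dset k k) (m + 1) (by omega) hfin
  rcases hR : RSP (Dset k k) (m + 1) with j' | m' | m' <;> rw [hR] at hmem hin heq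
  · exfalso
    rw [(h1 j').1, Sym2.mem_iff] at hin
    omega
  · rw [(h2 m').1, Sym2.mem_iff] at hin
    rcases hin with hin | hin
    · -- m + 1 = m' : the forward edge, ruled out
      exfalso
      have hm'k : (m' : ℕ) < k := m'.2
      have hends : ends (Sum.inr (Sum.inl m')) = s(m + 1, m + 2) := by
        rw [(h2 m').1, ← hin]
      rw [otherEnd_eq ends hends, ℓb h2 m', ← hin] at heq
      have hlow : 2 ^ (m + 2) * (M : ℝ≥0∞) + 1 ≤
          mwdist ends ℓ (Set.univ \ Dset k k) (m + 2) (k + 1) := by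
        have := mwdist_ge_pot (ends := ends) (ℓ := ℓ) hk hM h1 h2 h3 (le_refl k) (m + 2)
        rwa [pot_k_le (by omega)] at this
      have hbig : 2 ^ (m + 1) * (M : ℝ≥0∞) + (2 ^ (m + 2) * M + 1) ≤
          2 ^ (m + 1) * M + 1 := by
        calc 2 ^ (m + 1) * (M : ℝ≥0∞) + (2 ^ (m + 2) * M + 1)
            ≤ 2 ^ (m + 1) * M + mwdist ends ℓ (Set.univ \ Dset k k) (m + 2) (k + 1) :=
              add_le_add_right hlow _
          _ = mwdist ends ℓ (Set.univ \ Dset k k) (m + 1) (k + 1) := heq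
          _ ≤ 2 ^ (m + 1) * M + 1 := hd
      rw [ENNReal.add_le_add_iff_left (pm_ne_top (m + 1))] at hbig
      have h1' : (2 : ℝ≥0∞) ^ (m + 2) * M ≤ 0 := by
        have h' : (2 : ℝ≥0∞) ^ (m + 2) * M + 1 ≤ 0 + 1 := by simpa using hbig
        exact (ENNReal.add_le_add_iff_right ENNReal.one_ne_top).mp h'
      exact absurd (le_trans (one_le_pm hM (m + 2)) h1') (by simp)
    · -- m + 1 = m' + 1
      rw [bedge_eq hm]
      congr 2
      exact Fin.ext (by simp only [Fin.val_mk]; omega)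
  · exfalso
    rw [(h3 m').1, Sym2.mem_iff] at hin
    rcases hin with hin | hin
    · exact hmem.2 ((te_mem_Dset m').mpr m'.2)
    · omega

include hk hM h1 h2 h3 hG in
lemma force_last : ∃ j' : Fin (k + 1), RSP (Dset k k) 0 = Sum.inl j' := by
  have hd := ub_back (ends := ends) (ℓ := ℓ) (i := k) h1 h2 (j := 0) (by omega)
  simp only [pow_zero, one_mul] at hd
  have hfin : mwdist ends ℓ (Set.univ \ Dset k k) 0 (k + 1) ≠ ⊤ :=
    fun h => by
      rw [h, top_le_iff] at hd
      exact ENNReal.add_eq_top.mp hd |>.elim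
        (fun h' => ENNReal.natCast_ne_top M h') (fun h' => ENNReal.one_ne_top h')
  obtain ⟨hmem, hin, heq⟩ := hG (Dset k k) 0 (by omega) hfin
  rcases hR : RSP (Dset k k) 0 with j' | m' | m' <;> rw [hR] at hmem hin heq
  · exact ⟨j', rfl⟩
  · exfalso
    rw [(h2 m').1, Sym2.mem_iff] at hin
    have hm0 : (m' : ℕ) = 0 := by omega
    have hends : ends (Sum.inr (Sum.inl m')) = s(0, 1) := by
      rw [(h2 m').1, hm0]
    rw [otherEnd_eq ends hends, ℓb h2 m', hm0] at heq
    have hlow : 2 ^ 1 * (M : ℝ≥0∞) + 1 ≤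
        mwdist ends ℓ (Set.univ \ Dset k k) 1 (k + 1) := by
      have := mwdist_ge_pot (ends := ends) (ℓ := ℓ) hk hM h1 h2 h3 (le_refl k) 1
      rwa [pot_k_le (by omega)] at this
    have hbig : 2 ^ 0 * (M : ℝ≥0∞) + (2 ^ 1 * M + 1) ≤ 2 ^ 0 * M + 1 := by
      calc 2 ^ 0 * (M : ℝ≥0∞) + (2 ^ 1 * M + 1)
          ≤ 2 ^ 0 * M + mwdist ends ℓ (Set.univ \ Dset k k) 1 (k + 1) :=
            add_le_add_right hlow _
        _ = mwdist ends ℓ (Set.univ \ Dset k k) 0 (k + 1) := heq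
        _ ≤ 2 ^ 0 * M + 1 := by simpa [pow_zero, one_mul] using hd
    rw [ENNReal.add_le_add_iff_left (pm_ne_top 0)] at hbig
    have h1' : (2 : ℝ≥0∞) ^ 1 * M ≤ 0 := by
      have h' : (2 : ℝ≥0∞) ^ 1 * M + 1 ≤ 0 + 1 := by simpa using hbig
      exact (ENNReal.add_le_add_iff_right ENNReal.one_ne_top).mp h'
    exact absurd (le_trans (one_le_pm hM 1) h1') (by simp)
  · exfalso
    rw [(h3 m').1, Sym2.mem_iff] at hin
    omega
end Inst4
section Inst5
variable {k M : ℕ} {ends : EGr k → Sym2 ℕ} {ℓ : EGr k → ℝ≥0∞}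
variable (hk : 1 ≤ k) (hM : 0 < M)
variable (h1 : ∀ j : Fin (k + 1), ends (Sum.inl j) = s(0, k + 1) ∧
  ℓ (Sum.inl j) = (M : ℝ≥0∞) + 1)
variable (h2 : ∀ i : Fin k, ends (Sum.inr (Sum.inl i)) = s((i : ℕ), (i : ℕ) + 1) ∧
  ℓ (Sum.inr (Sum.inl i)) = if (i : ℕ) = 0 then (M : ℝ≥0∞) else 2 ^ (i : ℕ) * (M : ℝ≥0∞))
variable (h3 : ∀ i : Fin k, ends (Sum.inr (Sum.inr i)) = s((i : ℕ) + 1, k + 1) ∧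
  ℓ (Sum.inr (Sum.inr i)) = 0)
variable {RSP : Strategy ℕ (EGr k)} (hG : Greedy ends ℓ Set.univ (k + 1) RSP)

local notation "stp" => rstep ends Set.univ (Dset k k) RSP (k + 1)
local notation "st" => rstate ends Set.univ (Dset k k) RSP (k + 1) 0
local notation "cst " n:max => rstepCost ends ℓ Set.univ (Dset k k) RSP (k + 1) (st n)

lemma st_succ (n : ℕ) : st (n + 1) = stp (st n) := by
  rw [rstate, rstate, Function.iterate_succ_apply']

lemma tedge_mem_F {m : ℕ} (hm : m < k) : tedge k m ∈ Dset k k := by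
  rw [tedge_eq hm]; exact (te_mem_Dset _).mpr hm

include hk hM h1 h2 h3 hG in
lemma trace_fwd : ∀ j, j ≤ k → st (2 * j) = (j, Dset k j) := by
  intro j
  induction j with
  | zero => intro _; rw [Nat.mul_zero, rstate, Function.iterate_zero_apply, Dset_zero]
  | succ j ih =>
    intro hj
    have hjk : j < k := by omega
    have hmid : st (2 * j + 1) = (j + 1, Dset k j) := by
      rw [st_succ, ih (by omega), rstep]
      simp only
      rw [if_neg (by omega : ¬ j = k + 1), force_fwd hk hM h1 h2 h3 hG hjk,
        if_pos ⟨trivial, by rw [ends_bedge h2 hjk]; exact Sym2.mem_mk_left _ _⟩,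
        if_neg (bedge_not_Dset hjk), otherEnd_eq ends (ends_bedge h2 hjk)]
    have : 2 * (j + 1) = (2 * j + 1) + 1 := by omega
    rw [this, st_succ, hmid, rstep]
    simp only
    rw [if_neg (by omega : ¬ j + 1 = k + 1), force_probe hk hM h1 h2 h3 hG hjk,
      if_pos ⟨trivial, by rw [ends_tedge h3 hjk]; exact Sym2.mem_mk_left _ _⟩,
      if_pos (tedge_mem_F hjk), Dset_insert hjk]

include hk hM h1 h2 h3 hG in
lemma trace_back : ∀ c, c ≤ k → st (2 * k + c) = (k - c, Dset k k) := by
  intro c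
  induction c with
  | zero => intro _; simpa using trace_fwd hk hM h1 h2 h3 hG k (le_refl k)
  | succ c ih =>
    intro hc
    have hm : k - c - 1 < k := by omega
    have hkc : k - c = (k - c - 1) + 1 := by omega
    have : 2 * k + (c + 1) = (2 * k + c) + 1 := by omega
    rw [this, st_succ, ih (by omega), hkc, rstep]
    simp only
    have hends : ends (bedge k (k - c - 1)) = s(k - c - 1 + 1, k - c - 1) := by
      rw [ends_bedge h2 hm]; exact Sym2.eq_swap
    rw [if_neg (by omega : ¬ k - c - 1 + 1 = k + 1),
      force_back hk hM h1 h2 h3 hG hm,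
      if_pos ⟨trivial, by rw [ends_bedge h2 hm]; exact Sym2.mem_mk_right _ _⟩,
      if_neg (bedge_not_Dset hm), otherEnd_eq ends hends]
    congr 1
    all_goals omega

include hk hM h1 h2 h3 hG in
lemma trace_end : st (3 * k + 1) = (k + 1, Dset k k) := by
  have h0 : st (3 * k) = (0, Dset k k) := by
    have : 3 * k = 2 * k + k := by omega
    rw [this]
    simpa using trace_back hk hM h1 h2 h3 hG k (le_refl k)
  obtain ⟨j', hj'⟩ := force_last hk hM h1 h2 h3 hG
  rw [st_succ, h0, rstep]
  simp only
  rw [if_neg (by omega : ¬ (0 : ℕ) = k + 1), hj',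
    if_pos ⟨trivial, by rw [(h1 j').1]; exact Sym2.mem_mk_left _ _⟩,
    if_neg (inl_not_Dset j'), otherEnd_eq ends (h1 j').1]

include hk hM h1 h2 h3 hG in
lemma trace_tail (n : ℕ) : st (n + (3 * k + 1)) = (k + 1, Dset k k) := by
  rw [rstate, Function.iterate_add_apply]
  have := trace_end hk hM h1 h2 h3 hG
  rw [rstate] at this
  rw [this]
  exact rstep_iterate_fixed _ _ _ _ _ (p := (k + 1, Dset k k)) rfl n

include hk hM h1 h2 h3 hG in
lemma cost_fwd {j : ℕ} (hj : j < k) : cst (2 * j) = 2 ^ j * M := by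
  rw [trace_fwd hk hM h1 h2 h3 hG j (le_of_lt hj), rstepCost]
  simp only
  rw [if_neg (by omega : ¬ j = k + 1), force_fwd hk hM h1 h2 h3 hG hj,
    if_pos ⟨trivial, by rw [ends_bedge h2 hj]; exact Sym2.mem_mk_left _ _,
      bedge_not_Dset hj⟩, ℓ_bedge h2 hj]

include hk hM h1 h2 h3 hG in
lemma cost_probe {j : ℕ} (hj : j < k) : cst (2 * j + 1) = 0 := by
  have hmid : st (2 * j + 1) = (j + 1, Dset k j) := by
    rw [st_succ, trace_fwd hk hM h1 h2 h3 hG j (le_of_lt hj), rstep]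
    simp only
    rw [if_neg (by omega : ¬ j = k + 1), force_fwd hk hM h1 h2 h3 hG hj,
      if_pos ⟨trivial, by rw [ends_bedge h2 hj]; exact Sym2.mem_mk_left _ _⟩,
      if_neg (bedge_not_Dset hj), otherEnd_eq ends (ends_bedge h2 hj)]
  rw [hmid, rstepCost]
  simp only
  rw [if_neg (by omega : ¬ j + 1 = k + 1), force_probe hk hM h1 h2 h3 hG hj,
    if_neg (fun h => h.2.2 (tedge_mem_F hj))]

include hk hM h1 h2 h3 hG in
lemma cost_back {c : ℕ} (hc : c < k) : cst (2 * k + c) = 2 ^ (k - c - 1) * M := by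
  have hm : k - c - 1 < k := by omega
  have hkc : k - c = (k - c - 1) + 1 := by omega
  rw [trace_back hk hM h1 h2 h3 hG c (le_of_lt hc), hkc, rstepCost]
  simp only
  rw [if_neg (by omega : ¬ k - c - 1 + 1 = k + 1), force_back hk hM h1 h2 h3 hG hm,
    if_pos ⟨trivial, by rw [ends_bedge h2 hm]; exact Sym2.mem_mk_right _ _,
      bedge_not_Dset hm⟩, ℓ_bedge h2 hm, Nat.add_sub_cancel]

include hk hM h1 h2 h3 hG in
lemma cost_final : cst (3 * k) = (M : ℝ≥0∞) + 1 := by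
  have h0 : st (3 * k) = (0, Dset k k) := by
    have : 3 * k = 2 * k + k := by omega
    rw [this]
    simpa using trace_back hk hM h1 h2 h3 hG k (le_refl k)
  obtain ⟨j', hj'⟩ := force_last hk hM h1 h2 h3 hG
  rw [h0, rstepCost]
  simp only
  rw [if_neg (by omega : ¬ (0 : ℕ) = k + 1), hj',
    if_pos ⟨trivial, by rw [(h1 j').1]; exact Sym2.mem_mk_left _ _, inl_not_Dset j'⟩,
    (h1 j').2]

include hk hM h1 h2 h3 hG in
lemma cost_tail {n : ℕ} (hn : 3 * k + 1 ≤ n) : cst n = 0 := by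
  have : st n = (k + 1, Dset k k) := by
    have h' : n = (n - (3 * k + 1)) + (3 * k + 1) := by omega
    rw [h']
    exact trace_tail hk hM h1 h2 h3 hG _
  rw [this, rstepCost, if_pos rfl]
end Inst5
lemma geom_aux (M : ℕ) : ∀ K : ℕ,
    (∑ i ∈ Finset.range K, 2 ^ i * (M : ℝ≥0∞)) + M = 2 ^ K * M := by
  intro K
  induction K with
  | zero => simp
  | succ K ih =>
    rw [Finset.sum_range_succ, pm_succ]
    calc (∑ i ∈ Finset.range K, 2 ^ i * (M:ℝ≥0∞)) + 2 ^ K * M + M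
        = ((∑ i ∈ Finset.range K, 2 ^ i * (M:ℝ≥0∞)) + M) + 2 ^ K * M := by ring
      _ = 2 ^ K * M + 2 ^ K * M := by rw [ih]

lemma cancel_M {M : ℕ} {a b : ℝ≥0∞} (h : a + (M : ℝ≥0∞) = b + M) : a = b := by
  have h' := congrArg (fun x => x - (M : ℝ≥0∞)) h
  simpa [ENNReal.add_sub_cancel_right (ENNReal.natCast_ne_top M)] using h'

section Inst6
variable {k M : ℕ} {ends : EGr k → Sym2 ℕ} {ℓ : EGr k → ℝ≥0∞}
variable (hk : 1 ≤ k) (hM : 0 < M)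
variable (h1 : ∀ j : Fin (k + 1), ends (Sum.inl j) = s(0, k + 1) ∧
  ℓ (Sum.inl j) = (M : ℝ≥0∞) + 1)
variable (h2 : ∀ i : Fin k, ends (Sum.inr (Sum.inl i)) = s((i : ℕ), (i : ℕ) + 1) ∧
  ℓ (Sum.inr (Sum.inl i)) = if (i : ℕ) = 0 then (M : ℝ≥0∞) else 2 ^ (i : ℕ) * (M : ℝ≥0∞))
variable (h3 : ∀ i : Fin k, ends (Sum.inr (Sum.inr i)) = s((i : ℕ) + 1, k + 1) ∧
  ℓ (Sum.inr (Sum.inr i)) = 0)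
variable {RSP : Strategy ℕ (EGr k)} (hG : Greedy ends ℓ Set.univ (k + 1) RSP)

local notation "cst " n:max => rstepCost ends ℓ Set.univ (Dset k k) RSP (k + 1)
    (rstate ends Set.univ (Dset k k) RSP (k + 1) 0 n)

include hk hM h1 h2 h3 hG in
lemma sum_fwd : ∀ j, j ≤ k →
    (∑ n ∈ Finset.range (2 * j), cst n) + M = 2 ^ j * M := by
  intro j
  induction j with
  | zero => simp
  | succ j ih =>
    intro hj
    have hjk : j < k := by omega
    have h2j : 2 * (j + 1) = (2 * j + 1) + 1 := by omega
    rw [h2j, Finset.sum_range_succ, Finset.sum_range_succ,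
      cost_fwd hk hM h1 h2 h3 hG hjk, cost_probe hk hM h1 h2 h3 hG hjk, add_zero, pm_succ]
    calc (∑ n ∈ Finset.range (2 * j), cst n) + 2 ^ j * (M:ℝ≥0∞) + M
        = ((∑ n ∈ Finset.range (2 * j), cst n) + M) + 2 ^ j * M := by ring
      _ = 2 ^ j * M + 2 ^ j * M := by rw [ih (by omega)]

include hk hM h1 h2 h3 hG in
lemma sum_back : ∀ c, c ≤ k →
    (∑ n ∈ Finset.range (2 * k + c), cst n) + M + 2 ^ (k - c) * M
      = 2 ^ k * M + 2 ^ k * M := by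
  intro c
  induction c with
  | zero =>
    intro _
    rw [Nat.add_zero, Nat.sub_zero, sum_fwd hk hM h1 h2 h3 hG k (le_refl k)]
  | succ c ih =>
    intro hc
    have hck : c < k := by omega
    have hkc : k - c = (k - c - 1) + 1 := by omega
    have hkc2 : k - (c + 1) = k - c - 1 := by omega
    rw [show 2 * k + (c + 1) = (2 * k + c) + 1 by omega, Finset.sum_range_succ,
      cost_back hk hM h1 h2 h3 hG hck, hkc2]
    calc (∑ n ∈ Finset.range (2 * k + c), cst n) + 2 ^ (k - c - 1) * (M:ℝ≥0∞) + M
          + 2 ^ (k - c - 1) * M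
        = (∑ n ∈ Finset.range (2 * k + c), cst n) + M
          + (2 ^ (k - c - 1) * M + 2 ^ (k - c - 1) * M) := by ring
      _ = (∑ n ∈ Finset.range (2 * k + c), cst n) + M + 2 ^ (k - c) * M := by
          rw [← pm_succ, ← hkc]
      _ = 2 ^ k * M + 2 ^ k * M := ih (by omega)

include hk hM h1 h2 h3 hG in
lemma total_sum :
    (∑ n ∈ Finset.range (3 * k + 1), cst n)
      = (2 ^ (k + 1) - 1) * (M : ℝ≥0∞) + 1 := by
  have hsb := sum_back hk hM h1 h2 h3 hG k (le_refl k)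
  rw [Nat.sub_self, pow_zero, one_mul, show 2 * k + k = 3 * k by omega] at hsb
  have hsb2 : (∑ n ∈ Finset.range (3 * k), cst n) + M + M = 2 ^ (k + 1) * M := by
    rw [hsb, pm_succ]
  apply cancel_M (M := M)
  have hfin : cst (3 * k) = (M : ℝ≥0∞) + 1 := cost_final hk hM h1 h2 h3 hG
  calc (∑ n ∈ Finset.range (3 * k + 1), cst n) + M
      = ((∑ n ∈ Finset.range (3 * k), cst n) + cst (3 * k)) + M := by
        rw [Finset.sum_range_succ]
    _ = ((∑ n ∈ Finset.range (3 * k), cst n) + ((M : ℝ≥0∞) + 1)) + M := by rw [hfin]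
    _ = ((∑ n ∈ Finset.range (3 * k), cst n) + M + M) + 1 := by ring
    _ = 2 ^ (k + 1) * M + 1 := by rw [hsb2]
    _ = ((2 ^ (k + 1) - 1) + 1) * M + 1 := by
        rw [tsub_add_cancel_of_le (one_le_pow_of_one_le' (one_le_two : (1:ℝ≥0∞) ≤ 2) (k+1))]
    _ = ((2 ^ (k + 1) - 1) * M + M) + 1 := by rw [add_mul, one_mul]
    _ = ((2 ^ (k + 1) - 1) * M + 1) + M := by ring

include hk hM h1 h2 h3 hG in
lemma walk_eq :
    walkCost ends ℓ Set.univ (Dset k k) RSP (k + 1) 0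
      = (2 ^ (k + 1) - 1) * (M : ℝ≥0∞) + 1 := by
  rw [walkCost, if_pos ⟨3 * k + 1, by rw [trace_end hk hM h1 h2 h3 hG]⟩]
  rw [tsum_eq_sum (s := Finset.range (3 * k + 1))
    (fun n hn => cost_tail hk hM h1 h2 h3 hG (by simpa using hn))]
  exact total_sum hk hM h1 h2 h3 hG
end Inst6
open Classical in
/-- The robust strategy: always probe an unfailed parallel edge. -/
noncomputable def R0 (k : ℕ) : Strategy ℕ (EGr k) := fun F' _ =>
  if h : ∃ j : Fin (k + 1), (Sum.inl j : EGr k) ∉ F' then Sum.inl h.choose else Sum.inl 0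

section Inst7
variable {k M : ℕ} {ends : EGr k → Sym2 ℕ} {ℓ : EGr k → ℝ≥0∞}
variable (hk : 1 ≤ k) (hM : 0 < M)
variable (h1 : ∀ j : Fin (k + 1), ends (Sum.inl j) = s(0, k + 1) ∧
  ℓ (Sum.inl j) = (M : ℝ≥0∞) + 1)
variable {F : Set (EGr k)} (hFfin : F.Finite) (hFcard : F.ncard ≤ k)

include hFfin hFcard in
lemma exists_unfailed {D : Set (EGr k)} (hDF : ∀ e ∈ D, e ∈ F) :
    ∃ j : Fin (k + 1), (Sum.inl j : EGr k) ∉ D := by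
  by_contra hcon
  push_neg at hcon
  have hsub : Set.range (Sum.inl : Fin (k + 1) → EGr k) ⊆ F := by
    rintro e ⟨j, rfl⟩; exact hDF _ (hcon j)
  have hcard : (Set.range (Sum.inl : Fin (k + 1) → EGr k)).ncard = k + 1 := by
    rw [← Set.image_univ, Set.ncard_image_of_injective _ Sum.inl_injective,
      Set.ncard_univ]
    simp
  have := Set.ncard_le_ncard hsub hFfin
  omega

include hk h1 hFfin hFcard in
lemma run_lemma : ∀ (N : ℕ) (D : Set (EGr k)),
    {j : Fin (k + 1) | (Sum.inl j : EGr k) ∈ F ∧ (Sum.inl j : EGr k) ∉ D}.ncard ≤ N →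
    (∀ e ∈ D, e ∈ F) →
    ∃ Nf : ℕ, ((rstep ends Set.univ F (R0 k) (k + 1))^[Nf] (0, D)).1 = k + 1 ∧
      ∑ n ∈ Finset.range Nf,
        rstepCost ends ℓ Set.univ F (R0 k) (k + 1)
          ((rstep ends Set.univ F (R0 k) (k + 1))^[n] (0, D)) ≤ (M : ℝ≥0∞) + 1 := by
  intro N
  induction N with
  | zero =>
    intro D hμ hDF
    obtain ⟨j0, hj0⟩ := exists_unfailed hFfin hFcard hDF
    have hch : ∃ j : Fin (k + 1), (Sum.inl j : EGr k) ∉ D := ⟨j0, hj0⟩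
    have hR : R0 k D 0 = Sum.inl hch.choose := by rw [R0, dif_pos hch]
    have hjF : (Sum.inl hch.choose : EGr k) ∉ F := by
      intro hmem
      have : hch.choose ∈ {j : Fin (k + 1) | (Sum.inl j : EGr k) ∈ F ∧
          (Sum.inl j : EGr k) ∉ D} := ⟨hmem, hch.choose_spec⟩
      have hpos : 0 < {j : Fin (k + 1) | (Sum.inl j : EGr k) ∈ F ∧
          (Sum.inl j : EGr k) ∉ D}.ncard :=
        (Set.ncard_pos (Set.toFinite _)).mpr ⟨_, this⟩
      omega
    refine ⟨1, ?_, ?_⟩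
    · rw [Function.iterate_one, rstep]
      simp only
      rw [if_neg (by omega : ¬ (0 : ℕ) = k + 1), hR,
        if_pos ⟨trivial, by rw [(h1 _).1]; exact Sym2.mem_mk_left _ _⟩,
        if_neg hjF, otherEnd_eq ends (h1 _).1]
    · rw [Finset.sum_range_one, Function.iterate_zero_apply, rstepCost]
      simp only
      rw [if_neg (by omega : ¬ (0 : ℕ) = k + 1), hR]
      split
      · rw [(h1 _).2]
      · exact zero_le
  | succ N ih =>
    intro D hμ hDF
    obtain ⟨j0, hj0⟩ := exists_unfailed hFfin hFcard hDF
    have hch : ∃ j : Fin (k + 1), (Sum.inl j : EGr k) ∉ D := ⟨j0, hj0⟩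
    have hR : R0 k D 0 = Sum.inl hch.choose := by rw [R0, dif_pos hch]
    by_cases hjF : (Sum.inl hch.choose : EGr k) ∈ F
    · -- probe fails, discover it
      have hstep : rstep ends Set.univ F (R0 k) (k + 1) (0, D)
          = (0, insert (Sum.inl hch.choose) D) := by
        rw [rstep]
        simp only
        rw [if_neg (by omega : ¬ (0 : ℕ) = k + 1), hR,
          if_pos ⟨trivial, by rw [(h1 _).1]; exact Sym2.mem_mk_left _ _⟩, if_pos hjF]
      have hcost : rstepCost ends ℓ Set.univ F (R0 k) (k + 1) (0, D) = 0 := by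
        rw [rstepCost]
        simp only
        rw [if_neg (by omega : ¬ (0 : ℕ) = k + 1), hR,
          if_neg (fun h => h.2.2 hjF)]
      set D' := insert (Sum.inl hch.choose : EGr k) D with hD'
      have hμ' : {j : Fin (k + 1) | (Sum.inl j : EGr k) ∈ F ∧
          (Sum.inl j : EGr k) ∉ D'}.ncard ≤ N := by
        have hss : {j : Fin (k + 1) | (Sum.inl j : EGr k) ∈ F ∧ (Sum.inl j : EGr k) ∉ D'}
            ⊂ {j : Fin (k + 1) | (Sum.inl j : EGr k) ∈ F ∧ (Sum.inl j : EGr k) ∉ D} := by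
          constructor
          · rintro j ⟨hjf, hjd⟩
            exact ⟨hjf, fun h => hjd (Set.mem_insert_of_mem _ h)⟩
          · intro hsup
            have := hsup ⟨hjF, hch.choose_spec⟩
            exact this.2 (Set.mem_insert _ _)
        have := Set.ncard_lt_ncard hss (Set.toFinite _)
        omega
      have hDF' : ∀ e ∈ D', e ∈ F := by
        rintro e (rfl | he)
        · exact hjF
        · exact hDF e he
      obtain ⟨Nf, hend, hsum⟩ := ih D' hμ' hDF'
      refine ⟨Nf + 1, ?_, ?_⟩
      · rw [Function.iterate_succ_apply, hstep]; exact hend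
      · rw [Finset.sum_range_succ']
        simp only [Function.iterate_succ_apply, hstep, Function.iterate_zero_apply]
        rw [hcost, add_zero]
        exact hsum
    · -- probe succeeds, go to t
      refine ⟨1, ?_, ?_⟩
      · rw [Function.iterate_one, rstep]
        simp only
        rw [if_neg (by omega : ¬ (0 : ℕ) = k + 1), hR,
          if_pos ⟨trivial, by rw [(h1 _).1]; exact Sym2.mem_mk_left _ _⟩,
          if_neg hjF, otherEnd_eq ends (h1 _).1]
      · rw [Finset.sum_range_one, Function.iterate_zero_apply, rstepCost]
        simp only
        rw [if_neg (by omega : ¬ (0 : ℕ) = k + 1), hR]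
        split
        · rw [(h1 _).2]
        · exact zero_le

include hk h1 in
lemma part2 : yk ends ℓ k Set.univ (k + 1) 0 ≤ (M : ℝ≥0∞) + 1 := by
  refine le_trans (iInf_le _ (R0 k)) ?_
  rw [Valk]
  refine iSup₂_le fun F hF => ?_
  obtain ⟨hsub, hfin, hcard⟩ := hF
  obtain ⟨Nf, hend, hsum⟩ := run_lemma hk h1 hfin hcard (M := M) (ℓ := ℓ)
    ({j : Fin (k + 1) | (Sum.inl j : EGr k) ∈ F ∧
      (Sum.inl j : EGr k) ∉ (∅ : Set (EGr k))}.ncard) ∅ (le_refl _) (by simp)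
  have hreach : ReachesT ends Set.univ F (R0 k) (k + 1) 0 := ⟨Nf, hend⟩
  rw [walkCost, if_pos hreach]
  have hzero : ∀ n ∉ Finset.range Nf,
      rstepCost ends ℓ Set.univ F (R0 k) (k + 1)
        (rstate ends Set.univ F (R0 k) (k + 1) 0 n) = 0 := by
    intro n hn
    simp only [Finset.mem_range, not_lt] at hn
    have hstate : rstate ends Set.univ F (R0 k) (k + 1) 0 n
        = ((rstep ends Set.univ F (R0 k) (k + 1))^[Nf] (0, ∅)) := by
      rw [rstate, show n = (n - Nf) + Nf by omega, Function.iterate_add_apply]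
      exact rstep_iterate_fixed _ _ _ _ _ hend _
    rw [hstate]
    exact rstepCost_fixed _ _ _ _ _ _ hend
  rw [tsum_eq_sum hzero]
  exact hsum
end Inst7
lemma identity3 (k M : ℕ) :
    2 * (∑ i ∈ Finset.range k, 2 ^ i * (M : ℝ≥0∞)) + M + 1 =
      (2 ^ (k + 1) - 1) * (M : ℝ≥0∞) + 1 := by
  apply cancel_M (M := M)
  have hg := geom_aux M k
  calc 2 * (∑ i ∈ Finset.range k, 2 ^ i * (M : ℝ≥0∞)) + M + 1 + M
      = 2 * ((∑ i ∈ Finset.range k, 2 ^ i * (M : ℝ≥0∞)) + M) + 1 := by ring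
    _ = 2 * (2 ^ k * M) + 1 := by rw [hg]
    _ = 2 ^ (k + 1) * M + 1 := by rw [pow_succ]; ring
    _ = ((2 ^ (k + 1) - 1) + 1) * M + 1 := by
        rw [tsub_add_cancel_of_le (one_le_pow_of_one_le' (one_le_two : (1:ℝ≥0∞) ≤ 2) (k+1))]
    _ = ((2 ^ (k + 1) - 1) * M + 1) + M := by rw [add_mul, one_mul]; ring

/-- The witnessing instance: vertices `0 = s`, `u_i = i`
(`1 ≤ i ≤ k`), `t = k+1`; `k+1` parallel `s`-`t` edges of length `M+1`; path edges
`s u_1` of length `M` and `u_i u_{i+1}` of length `2^i M`; zero-length edges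
`u_i t`; failure scenario `F = {u_1 t, …, u_k t}`.  Any greedy shortest-path
strategy incurs total cost exactly `(2^{k+1} − 1)M + 1`, while the optimal
worst-case cost satisfies `y^k(s,E) ≤ M + 1`.  Auxiliary identity:
`2·∑_{i=0}^{k-1} 2^i M + M + 1 = (2^{k+1} − 1)M + 1`. -/
theorem greedy_witness_instance (k M : ℕ) (hk : 1 ≤ k) (hM : 0 < M) :
    ∀ (ends : Fin (k + 1) ⊕ Fin k ⊕ Fin k → Sym2 ℕ)
      (ℓ : Fin (k + 1) ⊕ Fin k ⊕ Fin k → ℝ≥0∞),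
      (∀ j : Fin (k + 1), ends (Sum.inl j) = s(0, k + 1) ∧
        ℓ (Sum.inl j) = (M : ℝ≥0∞) + 1) →
      (∀ i : Fin k, ends (Sum.inr (Sum.inl i)) = s((i : ℕ), (i : ℕ) + 1) ∧
        ℓ (Sum.inr (Sum.inl i)) =
          if (i : ℕ) = 0 then (M : ℝ≥0∞) else 2 ^ (i : ℕ) * (M : ℝ≥0∞)) →
      (∀ i : Fin k, ends (Sum.inr (Sum.inr i)) = s((i : ℕ) + 1, k + 1) ∧
        ℓ (Sum.inr (Sum.inr i)) = 0) →
      (∀ RSP : Strategy ℕ (Fin (k + 1) ⊕ Fin k ⊕ Fin k),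
        Greedy ends ℓ Set.univ (k + 1) RSP →
        walkCost ends ℓ Set.univ (Set.range (fun i => Sum.inr (Sum.inr i)))
            RSP (k + 1) 0 =
          (2 ^ (k + 1) - 1) * (M : ℝ≥0∞) + 1) ∧
      yk ends ℓ k Set.univ (k + 1) 0 ≤ (M : ℝ≥0∞) + 1 ∧
      2 * (∑ i ∈ Finset.range k, 2 ^ i * (M : ℝ≥0∞)) + M + 1 =
        (2 ^ (k + 1) - 1) * (M : ℝ≥0∞) + 1 := by
  intro ends ℓ h1 h2 h3
  refine ⟨?_, part2 hk h1, identity3 k M⟩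
  intro RSP hG
  rw [← Dset_k_eq]
  exact walk_eq hk hM h1 h2 h3 hG
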